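/- Let μ be the Haar probability measure on the unitary group U(2) of 2-by-2 complex unitary matrices, and fix z ∈ {0,1}. Then the Bochner integral ∫ (U|z⟩⟨z|U†) ⊗ (U|z⟩⟨z|U†) dμ(U) equals (1/3)·Π₊, where Π₊ = (I⊗I + F)/2 is the projector onto the symmetric subspace of C² ⊗ C². -/
import Mathlib


open Matrix MeasureTheory
open scoped BigOperators ComplexConjugate Kronecker

/-- The SWAP operator `F` on `ℂ² ⊗ ℂ²`. -/
noncomputable def swapF : Matrix (Fin 2 × Fin 2) (Fin 2 × Fin 2) ℂ :=
  fun p q => if p.1 = q.2 ∧ p.2 = q.1 then 1 else 0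

/-- The projector `Π₊ = (I⊗I + F)/2` onto the symmetric subspace of `ℂ² ⊗ ℂ²`. -/
noncomputable def piPlus2 : Matrix (Fin 2 × Fin 2) (Fin 2 × Fin 2) ℂ :=
  ((1 : ℂ) / 2) • (1 + swapF)

noncomputable instance : MeasurableSpace (Matrix.unitaryGroup (Fin 2) ℂ) := borel _
instance : BorelSpace (Matrix.unitaryGroup (Fin 2) ℂ) := ⟨rfl⟩

/-- The rank-one projector `|z⟩⟨z|` on `ℂ²`. -/
noncomputable def ketbra (z : Fin 2) : Matrix (Fin 2) (Fin 2) ℂ :=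
  fun a b => if a = z ∧ b = z then 1 else 0

namespace HAux

abbrev UG := Matrix.unitaryGroup (Fin 2) ℂ

/-- the `z`-th column of a unitary. -/
noncomputable def col (z : Fin 2) (U : UG) (a : Fin 2) : ℂ := (U : Matrix (Fin 2) (Fin 2) ℂ) a z

/-- the integrand: entry `((a,b),(c,d))` of `ρ ⊗ ρ`. -/
noncomputable def g (z a b c d : Fin 2) (U : UG) : ℂ :=
  col z U a * conj (col z U c) * (col z U b * conj (col z U d))

lemma continuous_col (z a : Fin 2) : Continuous fun U : UG => col z U a :=
  (continuous_apply z).comp ((continuous_apply a).comp continuous_subtype_val)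

lemma continuous_g (z a b c d : Fin 2) : Continuous (g z a b c d) := by
  unfold g
  exact ((continuous_col z a).mul (continuous_col z c).star).mul
    ((continuous_col z b).mul (continuous_col z d).star)

lemma col_unit (z : Fin 2) (U : UG) :
    conj (col z U 0) * col z U 0 + conj (col z U 1) * col z U 1 = 1 := by
  have h := U.2.1
  have h2 := congrFun (congrFun h z) z
  simpa [Matrix.mul_apply, Fin.sum_univ_two, Matrix.star_eq_conjTranspose,
    Matrix.conjTranspose_apply, Matrix.one_apply, col] using h2

lemma norm_col_le (z : Fin 2) (U : UG) (a : Fin 2) : ‖col z U a‖ ≤ 1 := by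
  have h := col_unit z U
  have h0 : ∀ b : Fin 2, conj (col z U b) * col z U b = (Complex.normSq (col z U b) : ℂ) := by
    intro b; rw [Complex.normSq_eq_conj_mul_self]
  rw [h0 0, h0 1] at h
  have hr : Complex.normSq (col z U 0) + Complex.normSq (col z U 1) = 1 := by
    exact_mod_cast h
  have hn : Complex.normSq (col z U a) ≤ 1 := by
    fin_cases a <;> simp only [Fin.zero_eta, Fin.mk_one, Fin.isValue] <;>
      nlinarith [Complex.normSq_nonneg (col z U 0), Complex.normSq_nonneg (col z U 1)]
  have h2 : ‖col z U a‖ ^ 2 ≤ 1 := by rw [← Complex.sq_norm] at hn; exact hn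
  nlinarith [norm_nonneg (col z U a)]

lemma norm_g_le (z a b c d : Fin 2) (U : UG) : ‖g z a b c d U‖ ≤ 1 := by
  unfold g
  have h : ∀ x : Fin 2, ‖conj (col z U x)‖ ≤ 1 := fun x => by
    rw [RCLike.norm_conj]; exact norm_col_le z U x
  calc ‖col z U a * conj (col z U c) * (col z U b * conj (col z U d))‖
      = ‖col z U a‖ * ‖conj (col z U c)‖ * (‖col z U b‖ * ‖conj (col z U d)‖) := by
        simp [norm_mul]
    _ ≤ 1 := by
        refine mul_le_one₀ (mul_le_one₀ (norm_col_le z U a) (norm_nonneg _) (h c))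
          (by positivity) (mul_le_one₀ (norm_col_le z U b) (norm_nonneg _) (h d))

instance : MeasurableMul UG where
  measurable_const_mul c := by
    have : Continuous fun x : UG => c * x :=
      continuous_induced_rng.2 (continuous_const.matrix_mul continuous_subtype_val)
    exact this.measurable
  measurable_mul_const c := by
    have : Continuous fun x : UG => x * c :=
      continuous_induced_rng.2 (continuous_subtype_val.matrix_mul continuous_const)
    exact this.measurable

variable (μ : Measure UG) [μ.IsHaarMeasure] [IsProbabilityMeasure μ]

lemma integrable_g (z a b c d : Fin 2) : Integrable (g z a b c d) μ := by
  refine (integrable_const (1 : ℝ)).mono' (continuous_g z a b c d).aestronglyMeasurable ?_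
  exact Filter.Eventually.of_forall fun U => by simpa using norm_g_le z a b c d U

lemma g_mul (z a b c d : Fin 2) (V U : UG) :
    g z a b c d (V * U) = ∑ t : Fin 2 × Fin 2 × Fin 2 × Fin 2,
      (V a t.1 * conj (V c t.2.2.1) * (V b t.2.1 * conj (V d t.2.2.2)))
        * g z t.1 t.2.1 t.2.2.1 t.2.2.2 U := by
  have hc : ∀ x : Fin 2, col z (V * U) x = V x 0 * col z U 0 + V x 1 * col z U 1 := by
    intro x
    simp [col, Matrix.UnitaryGroup.mul_val, Matrix.mul_apply, Fin.sum_univ_two]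
  unfold g
  simp only [hc, Fintype.sum_prod_type, Fin.sum_univ_two, map_add, _root_.map_mul]
  ring

lemma I_inv (z a b c d : Fin 2) (V : UG) :
    ∫ U, g z a b c d U ∂μ = ∑ t : Fin 2 × Fin 2 × Fin 2 × Fin 2,
      (V a t.1 * conj (V c t.2.2.1) * (V b t.2.1 * conj (V d t.2.2.2)))
        * ∫ U, g z t.1 t.2.1 t.2.2.1 t.2.2.2 U ∂μ := by
  rw [← integral_mul_left_eq_self (g z a b c d) V]
  rw [integral_congr_ae (Filter.Eventually.of_forall fun U => g_mul z a b c d V U)]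
  rw [integral_finset_sum _ fun t _ => ((integrable_g μ z t.1 t.2.1 t.2.2.1 t.2.2.2).const_mul _)]
  exact Finset.sum_congr rfl fun t _ => integral_const_mul _ _

noncomputable def D : UG := ⟨!![1, 0; 0, Complex.I], by
  rw [Matrix.mem_unitaryGroup_iff']
  ext i j
  fin_cases i <;> fin_cases j <;>
    simp [Matrix.mul_apply, Fin.sum_univ_two, Matrix.star_eq_conjTranspose,
      Matrix.conjTranspose_apply, Matrix.one_apply, Complex.ext_iff]⟩

noncomputable def X : UG := ⟨!![0, 1; 1, 0], by
  rw [Matrix.mem_unitaryGroup_iff']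
  ext i j
  fin_cases i <;> fin_cases j <;>
    simp [Matrix.mul_apply, Fin.sum_univ_two, Matrix.star_eq_conjTranspose,
      Matrix.conjTranspose_apply, Matrix.one_apply]⟩

noncomputable def R : UG := ⟨!![3/5, 4/5; -4/5, 3/5], by
  rw [Matrix.mem_unitaryGroup_iff']
  ext i j
  fin_cases i <;> fin_cases j <;>
    simp [Matrix.mul_apply, Fin.sum_univ_two, Matrix.star_eq_conjTranspose,
      Matrix.conjTranspose_apply, Matrix.one_apply, Complex.ext_iff, Complex.conj_ofNat] <;>
    norm_num⟩

/-- phase factors for `D`. -/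
noncomputable def φ (a : Fin 2) : ℂ := if a = 1 then Complex.I else 1

lemma col_D (z : Fin 2) (U : UG) (a : Fin 2) : col z (D * U) a = φ a * col z U a := by
  fin_cases a <;>
    simp [col, Matrix.UnitaryGroup.mul_val, Matrix.mul_apply, Fin.sum_univ_two, D, φ]

lemma g_D (z a b c d : Fin 2) (U : UG) :
    g z a b c d (D * U) = (φ a * conj (φ c) * (φ b * conj (φ d))) * g z a b c d U := by
  unfold g
  simp only [col_D, _root_.map_mul]
  ring

lemma col_X (z : Fin 2) (U : UG) (a : Fin 2) :
    col z (X * U) a = col z U (if a = 0 then 1 else 0) := by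
  fin_cases a <;>
    simp [col, Matrix.UnitaryGroup.mul_val, Matrix.mul_apply, Fin.sum_univ_two, X]

lemma phase_rel (z a b c d : Fin 2) :
    ∫ U, g z a b c d U ∂μ
      = (φ a * conj (φ c) * (φ b * conj (φ d))) * ∫ U, g z a b c d U ∂μ := by
  have h2 : ∫ U, g z a b c d (D * U) ∂μ
      = (φ a * conj (φ c) * (φ b * conj (φ d))) * ∫ U, g z a b c d U ∂μ := by
    rw [integral_congr_ae (Filter.Eventually.of_forall fun U => g_D z a b c d U)]
    exact integral_const_mul (φ a * conj (φ c) * (φ b * conj (φ d))) (g z a b c d)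
  rw [← h2]
  exact (integral_mul_left_eq_self (g z a b c d) D).symm

lemma eq_zero_of_phase {x c : ℂ} (h : x = c * x) (hc : c ≠ 1) : x = 0 := by
  have h2 : (1 - c) * x = 0 := by linear_combination h
  rcases mul_eq_zero.1 h2 with h3 | h3
  · exact absurd (by linear_combination -h3) hc
  · exact h3

lemma X_rel (z : Fin 2) :
    ∫ U, g z 0 0 0 0 U ∂μ = ∫ U, g z 1 1 1 1 U ∂μ := by
  rw [← integral_mul_left_eq_self (g z 0 0 0 0) X]
  refine integral_congr_ae (Filter.Eventually.of_forall fun U => ?_)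
  unfold g
  simp only [col_X]
  norm_num

lemma norm_rel (z : Fin 2) :
    ∑ t : Fin 2 × Fin 2, ∫ U, g z t.1 t.2 t.1 t.2 U ∂μ = 1 := by
  have hpt : ∀ U : UG, ∑ t : Fin 2 × Fin 2, g z t.1 t.2 t.1 t.2 U = 1 := by
    intro U
    have h := col_unit z U
    simp only [Fintype.sum_prod_type, Fin.sum_univ_two]
    unfold g
    linear_combination (conj (col z U 0) * col z U 0 + conj (col z U 1) * col z U 1 + 1) * h
  rw [← integral_finset_sum _ (fun t _ => integrable_g μ z t.1 t.2 t.1 t.2)]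
  rw [integral_congr_ae (Filter.Eventually.of_forall hpt)]
  simp

lemma rho_apply (z : Fin 2) (U : UG) (a b : Fin 2) :
    ((U : Matrix (Fin 2) (Fin 2) ℂ) * ketbra z * (U : Matrix (Fin 2) (Fin 2) ℂ)ᴴ) a b
      = col z U a * conj (col z U b) := by
  fin_cases z <;>
    simp [Matrix.mul_apply, ketbra, Fin.sum_univ_two, Matrix.conjTranspose_apply, col]

lemma entry_eq (z : Fin 2) (U : UG) (p q : Fin 2 × Fin 2) :
    ((((U : Matrix (Fin 2) (Fin 2) ℂ) * ketbra z * (U : Matrix (Fin 2) (Fin 2) ℂ)ᴴ) ⊗ₖ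
      (((U : Matrix (Fin 2) (Fin 2) ℂ) * ketbra z * (U : Matrix (Fin 2) (Fin 2) ℂ)ᴴ))) p q)
      = g z p.1 p.2 q.1 q.2 U := by
  simp [Matrix.kroneckerMap_apply, rho_apply, g]

end HAux

/-- For the Haar probability measure `μ` on `U(2)` and any `z ∈ {0,1}`, the (entrywise Bochner)
integral `∫ (U|z⟩⟨z|U†) ⊗ (U|z⟩⟨z|U†) dμ(U)` equals `(1/3)Π₊`. -/
theorem haar_avg_eq_sym_proj (z : Fin 2) (μ : Measure (Matrix.unitaryGroup (Fin 2) ℂ))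
    [μ.IsHaarMeasure] [IsProbabilityMeasure μ] :
    ∀ a b : Fin 2 × Fin 2,
      (∫ U : Matrix.unitaryGroup (Fin 2) ℂ,
        ((((U : Matrix (Fin 2) (Fin 2) ℂ) * ketbra z * (U : Matrix (Fin 2) (Fin 2) ℂ)ᴴ) ⊗ₖ
          ((U : Matrix (Fin 2) (Fin 2) ℂ) * ketbra z * (U : Matrix (Fin 2) (Fin 2) ℂ)ᴴ)) a b) ∂μ)
      = (((1 : ℂ) / 3) • piPlus2) a b := by
  intro p q
  obtain ⟨a1, a2⟩ := p
  obtain ⟨b1, b2⟩ := q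
  rw [integral_congr_ae (Filter.Eventually.of_forall fun U => HAux.entry_eq z U (a1, a2) (b1, b2))]
  -- abbreviation for the moment integrals
  set Iv : Fin 2 → Fin 2 → Fin 2 → Fin 2 → ℂ :=
    fun a b c d => ∫ U, HAux.g z a b c d U ∂μ with hIv
  -- vanishing of phase-incompatible moments
  have key : ∀ a b c d : Fin 2,
      (HAux.φ a * conj (HAux.φ c) * (HAux.φ b * conj (HAux.φ d))) ≠ 1 → Iv a b c d = 0 :=
    fun a b c d h => HAux.eq_zero_of_phase (HAux.phase_rel μ z a b c d) h
  have c1 : (HAux.φ 0 : ℂ) = 1 := rfl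
  have c2 : (HAux.φ 1 : ℂ) = Complex.I := rfl
  have z0001 : Iv 0 0 0 1 = 0 := key _ _ _ _ (by
    rw [c1, c2]; simp [Complex.ext_iff])
  have z0010 : Iv 0 0 1 0 = 0 := key _ _ _ _ (by
    rw [c1, c2]; simp [Complex.ext_iff])
  have z0100 : Iv 0 1 0 0 = 0 := key _ _ _ _ (by
    rw [c1, c2]; simp [Complex.ext_iff])
  have z1000 : Iv 1 0 0 0 = 0 := key _ _ _ _ (by
    rw [c1, c2]; simp [Complex.ext_iff])
  have z0011 : Iv 0 0 1 1 = 0 := key _ _ _ _ (by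
    rw [c1, c2]; simp [Complex.ext_iff] <;> norm_num)
  have z1100 : Iv 1 1 0 0 = 0 := key _ _ _ _ (by
    rw [c1, c2]; simp [Complex.ext_iff] <;> norm_num)
  have z0111 : Iv 0 1 1 1 = 0 := key _ _ _ _ (by
    rw [c1, c2]; simp [Complex.ext_iff] <;> norm_num)
  have z1011 : Iv 1 0 1 1 = 0 := key _ _ _ _ (by
    rw [c1, c2]; simp [Complex.ext_iff] <;> norm_num)
  have z1101 : Iv 1 1 0 1 = 0 := key _ _ _ _ (by
    rw [c1, c2]; simp [Complex.ext_iff] <;> norm_num)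
  have z1110 : Iv 1 1 1 0 = 0 := key _ _ _ _ (by
    rw [c1, c2]; simp [Complex.ext_iff] <;> norm_num)
  -- the four "mixed" moments coincide
  have hs1 : Iv 0 1 1 0 = Iv 0 1 0 1 := by
    refine integral_congr_ae (Filter.Eventually.of_forall fun U => ?_)
    unfold HAux.g; ring
  have hs2 : Iv 1 0 0 1 = Iv 0 1 0 1 := by
    refine integral_congr_ae (Filter.Eventually.of_forall fun U => ?_)
    unfold HAux.g; ring
  have hs3 : Iv 1 0 1 0 = Iv 0 1 0 1 := by
    refine integral_congr_ae (Filter.Eventually.of_forall fun U => ?_)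
    unfold HAux.g; ring
  -- symmetry between the two diagonal moments
  have hX : Iv 0 0 0 0 = Iv 1 1 1 1 := HAux.X_rel μ z
  -- normalization
  have hN : Iv 0 0 0 0 + Iv 0 1 0 1 + Iv 1 0 1 0 + Iv 1 1 1 1 = 1 := by
    have h := HAux.norm_rel μ z
    simp only [Fintype.sum_prod_type, Fin.sum_univ_two] at h
    linear_combination h
  -- averaging relation coming from the rotation R
  have hR : Iv 0 0 0 0 = ∑ t : Fin 2 × Fin 2 × Fin 2 × Fin 2,
      (HAux.R 0 t.1 * conj (HAux.R 0 t.2.2.1) * (HAux.R 0 t.2.1 * conj (HAux.R 0 t.2.2.2)))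
        * Iv t.1 t.2.1 t.2.2.1 t.2.2.2 := HAux.I_inv μ z 0 0 0 0 HAux.R
  simp only [Fintype.sum_prod_type, Fin.sum_univ_two, HAux.R, Matrix.cons_val',
    Matrix.cons_val_zero, Matrix.cons_val_one, Matrix.head_cons, Matrix.head_fin_const,
    Matrix.empty_val', Matrix.cons_val_fin_one] at hR
  norm_num [map_div₀, map_neg, Complex.conj_ofNat] at hR
  rw [z0001, z0010, z0011, z0100, z0111, z1000, z1011, z1100, z1101, z1110, hs1, hs2, hs3]
    at hR
  rw [hs3] at hN
  -- solve for the moments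
  have e1 : Iv 0 0 0 0 = 1 / 3 := by
    linear_combination ((625 : ℂ) / 864) * hR + ((1 : ℂ) / 27) * hX + ((1 : ℂ) / 3) * hN
  have e2 : Iv 1 1 1 1 = 1 / 3 := by rw [← hX]; exact e1
  have e3 : Iv 0 1 0 1 = 1 / 6 := by
    linear_combination ((1 : ℂ) / 2) * hN - ((1 : ℂ) / 2) * e1 - ((1 : ℂ) / 2) * e2
  have e4 : Iv 0 1 1 0 = 1 / 6 := by rw [hs1]; exact e3
  have e5 : Iv 1 0 0 1 = 1 / 6 := by rw [hs2]; exact e3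
  have e6 : Iv 1 0 1 0 = 1 / 6 := by rw [hs3]; exact e3
  -- conclude entrywise
  show Iv a1 a2 b1 b2 = _
  fin_cases a1 <;> fin_cases a2 <;> fin_cases b1 <;> fin_cases b2 <;>
    simp [piPlus2, swapF, Matrix.one_apply, Matrix.smul_apply, Matrix.add_apply, Prod.ext_iff,
      e1, e2, e3, e4, e5, e6, z0001, z0010, z0100, z1000, z0011, z1100, z0111, z1011, z1101,
      z1110] <;>
    norm_num
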